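/- arXiv:2307.15662 — 3 statements merged into one kernel-verified Lean document; each statement's English description precedes it below -/
import Mathlib

section
/- The candidate control Lyapunov function V is strictly convex on ℝ^d. -/
/-!
The quadratic form of a positive definite matrix is strictly convex: along a convex combination
its defect from linearity is `a b ⟪x - y, T (x - y)⟫`. Each `σ_l` is such a form minus a linear
functional, hence convex; `max (σ_l x) 0` is then convex and nonnegative, so its square is convex,
and `V` is a strictly convex function plus convex ones.
-/

open scoped RealInnerProductSpace BigOperators

/-- Action of a `d × d` real matrix on `ℝ^d` (Euclidean space). -/
noncomputable def mApp {d : ℕ} (P : Matrix (Fin d) (Fin d) ℝ)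
    (x : EuclideanSpace ℝ (Fin d)) : EuclideanSpace ℝ (Fin d) :=
  Matrix.toEuclideanLin P x

/-- `σ(x) = ⟨x, P(x − μ)⟩`. -/
noncomputable def sig {d : ℕ} (P : Matrix (Fin d) (Fin d) ℝ)
    (μ x : EuclideanSpace ℝ (Fin d)) : ℝ :=
  ⟪x, mApp P (x - μ)⟫

/-- Candidate control Lyapunov function
`V(x) = ⟨x, P₀ x⟩ + Σ_{l=1}^{L} max(σ_l(x), 0)²`. -/
noncomputable def V {d L : ℕ} (P₀ : Matrix (Fin d) (Fin d) ℝ)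
    (P : Fin L → Matrix (Fin d) (Fin d) ℝ) (μ : Fin L → EuclideanSpace ℝ (Fin d))
    (x : EuclideanSpace ℝ (Fin d)) : ℝ :=
  ⟪x, mApp P₀ x⟫ + ∑ l, max (sig (P l) (μ l) x) 0 ^ 2

section InnerProductSpace

variable {E : Type*} [NormedAddCommGroup E] [InnerProductSpace ℝ E]

lemma inner_map_self_smul_add_smul (T : E →ₗ[ℝ] E) (x y : E) {a b : ℝ} (hab : a + b = 1) :
    ⟪a • x + b • y, T (a • x + b • y)⟫ =
      a * ⟪x, T x⟫ + b * ⟪y, T y⟫ - a * b * ⟪x - y, T (x - y)⟫ := by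
  simp only [map_add, map_smul, map_sub, inner_add_left, inner_add_right, inner_sub_left,
    inner_sub_right, real_inner_smul_left, real_inner_smul_right]
  linear_combination (a * ⟪x, T x⟫ + b * ⟪y, T y⟫) * hab

lemma strictConvexOn_inner_map_self {T : E →ₗ[ℝ] E} (hT : ∀ v ≠ 0, 0 < ⟪v, T v⟫) :
    StrictConvexOn ℝ Set.univ fun x ↦ ⟪x, T x⟫ := by
  refine ⟨convex_univ, fun x _ y _ hxy a b ha hb hab ↦ ?_⟩
  have hpos := hT (x - y) (sub_ne_zero.mpr hxy)
  dsimp only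
  rw [inner_map_self_smul_add_smul T x y hab, smul_eq_mul, smul_eq_mul]
  nlinarith [mul_pos (mul_pos ha hb) hpos]

end InnerProductSpace

lemma Matrix.PosDef.inner_toEuclideanLin_pos {n : Type*} [Fintype n] [DecidableEq n]
    {A : Matrix n n ℝ} (hA : A.PosDef) {x : EuclideanSpace ℝ n} (hx : x ≠ 0) :
    0 < ⟪x, A.toEuclideanLin x⟫ := by
  rw [EuclideanSpace.inner_eq_star_dotProduct, Matrix.ofLp_toLpLin, dotProduct_comm]
  exact hA.dotProduct_mulVec_pos (by simpa using hx)

lemma ConvexOn.sum {𝕜 E β ι : Type*} [Semiring 𝕜] [PartialOrder 𝕜] [AddCommMonoid E]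
    [AddCommMonoid β] [PartialOrder β] [IsOrderedAddMonoid β] [SMul 𝕜 E] [Module 𝕜 β]
    {s : Set E} (hs : Convex 𝕜 s) (t : Finset ι) {f : ι → E → β}
    (hf : ∀ i ∈ t, ConvexOn 𝕜 s (f i)) : ConvexOn 𝕜 s fun x ↦ ∑ i ∈ t, f i x := by
  simpa only [← Finset.sum_apply] using
    Finset.sum_induction f (ConvexOn 𝕜 s) (fun _ _ ↦ ConvexOn.add) (convexOn_const 0 hs) hf

lemma ConvexOn.max_zero_sq {𝕜 E : Type*} [CommRing 𝕜] [LinearOrder 𝕜] [IsStrictOrderedRing 𝕜]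
    [AddCommGroup E] [Module 𝕜 E] {s : Set E} {f : E → 𝕜} (hf : ConvexOn 𝕜 s f) :
    ConvexOn 𝕜 s fun x ↦ max (f x) 0 ^ 2 :=
  (hf.sup (convexOn_const 0 hf.1)).pow (fun _ _ ↦ le_max_right _ _) 2

lemma sig_eq_sub_inner {d : ℕ} (A : Matrix (Fin d) (Fin d) ℝ) (μ : EuclideanSpace ℝ (Fin d)) :
    sig A μ = (fun x ↦ ⟪x, A.toEuclideanLin x⟫) - innerₗ _ (A.toEuclideanLin μ) := by
  ext x
  simp [sig, mApp, inner_sub_right, real_inner_comm]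

lemma convexOn_sig {d : ℕ} {A : Matrix (Fin d) (Fin d) ℝ} (hA : A.PosDef)
    (μ : EuclideanSpace ℝ (Fin d)) : ConvexOn ℝ Set.univ (sig A μ) := by
  rw [sig_eq_sub_inner]
  exact (strictConvexOn_inner_map_self fun _ ↦ hA.inner_toEuclideanLin_pos).convexOn.sub
    ((innerₗ _ _).concaveOn convex_univ)

/-- the candidate control Lyapunov function `V` is strictly convex on `ℝ^d`. -/
theorem stmt_3 {d L : ℕ} (P₀ : Matrix (Fin d) (Fin d) ℝ)
    (P : Fin L → Matrix (Fin d) (Fin d) ℝ) (μ : Fin L → EuclideanSpace ℝ (Fin d))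
    (hP₀ : P₀.PosDef) (hP : ∀ l, (P l).PosDef) :
    StrictConvexOn ℝ Set.univ (V P₀ P μ) :=
  (strictConvexOn_inner_map_self fun _ ↦ hP₀.inner_toEuclideanLin_pos).add_convexOn
    (ConvexOn.sum convex_univ _ fun l _ ↦ (convexOn_sig (hP l) (μ l)).max_zero_sq)
end

section
/- The gradient of the candidate control Lyapunov function V vanishes at the origin, ∇V(0) = 0, and the origin is the only critical point: for every x ∈ ℝ^d, ∇V(x) = 0 implies x = 0. -/
open scoped RealInnerProductSpace BigOperators

/-- The gradient formula
`∇V(x) = 2 P₀ x + 2 Σ_{l=1}^{L} max(σ_l(x), 0) · P_l (2x − μ_l)`. -/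
noncomputable def gradV {d L : ℕ} (P₀ : Matrix (Fin d) (Fin d) ℝ)
    (P : Fin L → Matrix (Fin d) (Fin d) ℝ) (μ : Fin L → EuclideanSpace ℝ (Fin d))
    (x : EuclideanSpace ℝ (Fin d)) : EuclideanSpace ℝ (Fin d) :=
  (2 : ℝ) • mApp P₀ x +
    (2 : ℝ) • ∑ l, max (sig (P l) (μ l) x) 0 • mApp (P l) ((2 : ℝ) • x - μ l)

/-!
Pairing the gradient with `x` gives
`⟪x, ∇V x⟫ = 2 ⟪x, P₀ x⟫ + 2 Σ_l max(σ_l x, 0) (⟪x, P_l x⟫ + σ_l x)`,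
because `⟪x, P_l (2x − μ_l)⟫ = ⟪x, P_l x⟫ + σ_l x`. Every summand is nonnegative (it vanishes
unless `σ_l x > 0`), and the first term is positive for `x ≠ 0`, so `∇V x ≠ 0` there.
-/

namespace Matrix

variable {d : ℕ}

theorem inner_mApp (P : Matrix (Fin d) (Fin d) ℝ) (x y : EuclideanSpace ℝ (Fin d)) :
    ⟪x, mApp P y⟫ = x ⬝ᵥ (P *ᵥ y) := by
  simp [mApp, Matrix.toEuclideanLin, inner, dotProduct, Matrix.mulVec, mul_comm]

theorem PosSemidef.inner_mApp_self_nonneg {P : Matrix (Fin d) (Fin d) ℝ} (hP : P.PosSemidef)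
    (x : EuclideanSpace ℝ (Fin d)) : 0 ≤ ⟪x, mApp P x⟫ := by
  simpa [inner_mApp] using hP.re_dotProduct_nonneg x

theorem PosDef.inner_mApp_self_pos {P : Matrix (Fin d) (Fin d) ℝ} (hP : P.PosDef)
    {x : EuclideanSpace ℝ (Fin d)} (hx : x ≠ 0) : 0 < ⟪x, mApp P x⟫ := by
  have hx' : (x : Fin d → ℝ) ≠ 0 := fun h => hx (by ext i; exact congrFun h i)
  simpa [inner_mApp] using hP.re_dotProduct_pos hx'

end Matrix

section Gradient

variable {d L : ℕ}

theorem inner_mApp_two_smul_sub (P : Matrix (Fin d) (Fin d) ℝ) (μ x : EuclideanSpace ℝ (Fin d)) :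
    ⟪x, mApp P ((2 : ℝ) • x - μ)⟫ = ⟪x, mApp P x⟫ + sig P μ x := by
  rw [sig, ← inner_add_right, mApp, mApp, mApp, ← map_add, two_smul, add_sub_assoc]

theorem max_sig_mul_inner_mApp_nonneg {P : Matrix (Fin d) (Fin d) ℝ} (hP : P.PosSemidef)
    (μ x : EuclideanSpace ℝ (Fin d)) :
    0 ≤ max (sig P μ x) 0 * ⟪x, mApp P ((2 : ℝ) • x - μ)⟫ := by
  rw [inner_mApp_two_smul_sub]
  rcases le_or_gt (sig P μ x) 0 with hσ | hσ
  · rw [max_eq_right hσ, zero_mul]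
  · rw [max_eq_left hσ.le]
    exact mul_nonneg hσ.le (add_nonneg (hP.inner_mApp_self_nonneg x) hσ.le)

theorem gradV_zero (P₀ : Matrix (Fin d) (Fin d) ℝ) (P : Fin L → Matrix (Fin d) (Fin d) ℝ)
    (μ : Fin L → EuclideanSpace ℝ (Fin d)) : gradV P₀ P μ 0 = 0 := by
  simp [gradV, sig, mApp]

theorem inner_gradV (P₀ : Matrix (Fin d) (Fin d) ℝ) (P : Fin L → Matrix (Fin d) (Fin d) ℝ)
    (μ : Fin L → EuclideanSpace ℝ (Fin d)) (x : EuclideanSpace ℝ (Fin d)) :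
    ⟪x, gradV P₀ P μ x⟫ = 2 * ⟪x, mApp P₀ x⟫ +
      2 * ∑ l, max (sig (P l) (μ l) x) 0 * ⟪x, mApp (P l) ((2 : ℝ) • x - μ l)⟫ := by
  simp only [gradV, inner_add_right, real_inner_smul_right, inner_sum]

theorem inner_gradV_pos {P₀ : Matrix (Fin d) (Fin d) ℝ} {P : Fin L → Matrix (Fin d) (Fin d) ℝ}
    (hP₀ : P₀.PosDef) (hP : ∀ l, (P l).PosSemidef) (μ : Fin L → EuclideanSpace ℝ (Fin d))
    {x : EuclideanSpace ℝ (Fin d)} (hx : x ≠ 0) : 0 < ⟪x, gradV P₀ P μ x⟫ := by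
  have hsum : 0 ≤ ∑ l, max (sig (P l) (μ l) x) 0 * ⟪x, mApp (P l) ((2 : ℝ) • x - μ l)⟫ :=
    Finset.sum_nonneg fun l _ => max_sig_mul_inner_mApp_nonneg (hP l) (μ l) x
  rw [inner_gradV]
  linarith [hP₀.inner_mApp_self_pos hx]

end Gradient

/-- `∇V(0) = 0`, and the origin is the only critical point:
`∇V(x) = 0` implies `x = 0`. -/
theorem stmt_5 {d L : ℕ} (P₀ : Matrix (Fin d) (Fin d) ℝ)
    (P : Fin L → Matrix (Fin d) (Fin d) ℝ) (μ : Fin L → EuclideanSpace ℝ (Fin d))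
    (hP₀ : P₀.PosDef) (hP : ∀ l, (P l).PosDef) :
    gradV P₀ P μ 0 = 0 ∧
      ∀ x : EuclideanSpace ℝ (Fin d), gradV P₀ P μ x = 0 → x = 0 := by
  refine ⟨gradV_zero P₀ P μ, fun x hgrad => ?_⟩
  by_contra hx
  have hpos := inner_gradV_pos hP₀ (fun l => (hP l).posSemidef) μ hx
  rw [hgrad, inner_zero_right] at hpos
  exact lt_irrefl 0 hpos
end

section
/- If λ > 0 is such that ⟨x, P₀ x⟩ ≥ λ‖x‖² for all x ∈ ℝ^d, then the gradient of the candidate control Lyapunov function satisfies the Łojasiewicz-type inequality ‖∇V(x)‖² ≥ λ · V(x) for every x ∈ ℝ^d. -/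
open scoped RealInnerProductSpace BigOperators

/-
Pairing the gradient with `x` gives `⟪x, ∇V(x)⟫ ≥ 2 V(x)`: the quadratic part contributes exactly
`2⟪x, P₀ x⟫`, and each penalty term contributes `2 max(σ_l, 0) (⟪x, P_l x⟫ + σ_l) ≥ 2 max(σ_l, 0)²`.
Together with `λ‖x‖² ≤ V(x)`, Cauchy–Schwarz yields `λ (2V)² ≤ λ ‖x‖² ‖∇V‖² ≤ V ‖∇V‖²`,
hence `4λ V ≤ ‖∇V‖²`.
-/

theorem mul_sq_mul_le_norm_sq_of_mul_le_inner {E : Type*} [NormedAddCommGroup E]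
    [InnerProductSpace ℝ E] {x g : E} {lam c v : ℝ} (hlam : 0 < lam) (hc : 0 ≤ c)
    (hv : lam * ‖x‖ ^ 2 ≤ v) (hg : c * v ≤ ⟪x, g⟫) : lam * c ^ 2 * v ≤ ‖g‖ ^ 2 := by
  have hv₀ : 0 ≤ v := le_trans (by positivity) hv
  rcases hv₀.eq_or_lt with rfl | hv_pos
  · simp
  have hcv : c * v ≤ ‖x‖ * ‖g‖ := hg.trans (real_inner_le_norm x g)
  have hsq : (c * v) ^ 2 ≤ ‖x‖ ^ 2 * ‖g‖ ^ 2 := by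
    rw [← mul_pow]; exact pow_le_pow_left₀ (by positivity) hcv 2
  have : v * (lam * c ^ 2 * v) ≤ v * ‖g‖ ^ 2 :=
    calc v * (lam * c ^ 2 * v) = lam * (c * v) ^ 2 := by ring
      _ ≤ lam * (‖x‖ ^ 2 * ‖g‖ ^ 2) := mul_le_mul_of_nonneg_left hsq hlam.le
      _ = lam * ‖x‖ ^ 2 * ‖g‖ ^ 2 := by ring
      _ ≤ v * ‖g‖ ^ 2 := mul_le_mul_of_nonneg_right hv (sq_nonneg _)
  exact le_of_mul_le_mul_left this hv_pos

theorem max_zero_mul_self (a : ℝ) : max a 0 * a = max a 0 ^ 2 := by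
  rcases le_total a 0 with h | h
  · simp [max_eq_right h]
  · rw [max_eq_left h, sq]

section Lyapunov

variable {d L : ℕ}

theorem inner_mApp_self_nonneg {P : Matrix (Fin d) (Fin d) ℝ} (hP : P.PosSemidef)
    (x : EuclideanSpace ℝ (Fin d)) : 0 ≤ ⟪x, mApp P x⟫ :=
  (Matrix.isPositive_toEuclideanLin_iff.mpr hP).inner_nonneg_right x

theorem inner_gradV_self (P₀ : Matrix (Fin d) (Fin d) ℝ) (P : Fin L → Matrix (Fin d) (Fin d) ℝ)
    (μ : Fin L → EuclideanSpace ℝ (Fin d)) (x : EuclideanSpace ℝ (Fin d)) :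
    ⟪x, gradV P₀ P μ x⟫ = 2 * ⟪x, mApp P₀ x⟫ +
      2 * ∑ l, max (sig (P l) (μ l) x) 0 * (⟪x, mApp (P l) x⟫ + sig (P l) (μ l) x) := by
  simp only [gradV, inner_add_right, real_inner_smul_right, inner_sum, inner_mApp_two_smul_sub]

theorem two_mul_V_le_inner_gradV (P₀ : Matrix (Fin d) (Fin d) ℝ)
    {P : Fin L → Matrix (Fin d) (Fin d) ℝ} (hP : ∀ l, (P l).PosSemidef)
    (μ : Fin L → EuclideanSpace ℝ (Fin d)) (x : EuclideanSpace ℝ (Fin d)) :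
    2 * V P₀ P μ x ≤ ⟪x, gradV P₀ P μ x⟫ := by
  have hterm : ∀ l, max (sig (P l) (μ l) x) 0 ^ 2
      ≤ max (sig (P l) (μ l) x) 0 * (⟪x, mApp (P l) x⟫ + sig (P l) (μ l) x) := fun l => by
    rw [mul_add, max_zero_mul_self, le_add_iff_nonneg_left]
    exact mul_nonneg (le_max_right _ _) (inner_mApp_self_nonneg (hP l) x)
  rw [inner_gradV_self, V]
  linarith [Finset.sum_le_sum fun l (_ : l ∈ Finset.univ) => hterm l]

theorem mul_norm_sq_le_V (P₀ : Matrix (Fin d) (Fin d) ℝ) (P : Fin L → Matrix (Fin d) (Fin d) ℝ)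
    (μ : Fin L → EuclideanSpace ℝ (Fin d)) {lam : ℝ} {x : EuclideanSpace ℝ (Fin d)}
    (hx : lam * ‖x‖ ^ 2 ≤ ⟪x, mApp P₀ x⟫) : lam * ‖x‖ ^ 2 ≤ V P₀ P μ x :=
  hx.trans (le_add_of_nonneg_right (Finset.sum_nonneg fun _ _ => sq_nonneg _))

end Lyapunov

theorem stmt_9_general {d L : ℕ} (P₀ : Matrix (Fin d) (Fin d) ℝ)
    (P : Fin L → Matrix (Fin d) (Fin d) ℝ) (μ : Fin L → EuclideanSpace ℝ (Fin d))
    (hP : ∀ l, (P l).PosDef) (lam : ℝ) (hlam : 0 < lam)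
    (hlb : ∀ x : EuclideanSpace ℝ (Fin d), lam * ‖x‖ ^ 2 ≤ ⟪x, mApp P₀ x⟫) :
    ∀ x : EuclideanSpace ℝ (Fin d), lam * V P₀ P μ x ≤ ‖gradV P₀ P μ x‖ ^ 2 := by
  intro x
  have hVx := mul_norm_sq_le_V P₀ P μ (hlb x)
  have hgrad := mul_sq_mul_le_norm_sq_of_mul_le_inner hlam zero_le_two hVx
    (two_mul_V_le_inner_gradV P₀ (fun l => (hP l).posSemidef) μ x)
  have hV₀ : 0 ≤ V P₀ P μ x := le_trans (by positivity) hVx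
  linarith [mul_nonneg hlam.le hV₀]

/-- if `λ > 0` satisfies `⟨x, P₀ x⟩ ≥ λ‖x‖²` for all `x`, then
`‖∇V(x)‖² ≥ λ · V(x)` for every `x ∈ ℝ^d`. -/
theorem stmt_9 {d L : ℕ} (P₀ : Matrix (Fin d) (Fin d) ℝ)
    (P : Fin L → Matrix (Fin d) (Fin d) ℝ) (μ : Fin L → EuclideanSpace ℝ (Fin d))
    (hP₀ : P₀.PosDef) (hP : ∀ l, (P l).PosDef) (lam : ℝ) (hlam : 0 < lam)
    (hlb : ∀ x : EuclideanSpace ℝ (Fin d), lam * ‖x‖ ^ 2 ≤ ⟪x, mApp P₀ x⟫) :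
    ∀ x : EuclideanSpace ℝ (Fin d), lam * V P₀ P μ x ≤ ‖gradV P₀ P μ x‖ ^ 2 :=
  stmt_9_general P₀ P μ hP lam hlam hlb
end
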